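/- π = 3 ln 2 + 3 ∑_{n=1}^∞ 1/(n(4n-1)(4n-3)). -/
import Mathlib

open Real Filter Finset Topology

private noncomputable def Lb (k : ℕ) : ℝ := ∑ i ∈ Finset.range k, (-1 : ℝ) ^ i / (2 * i + 1)
private noncomputable def Ah (k : ℕ) : ℝ := ∑ i ∈ Finset.range k, (-1 : ℝ) ^ i / (i + 1)
private noncomputable def Hr (k : ℕ) : ℝ := ∑ i ∈ Finset.range k, 1 / ((i : ℝ) + 1)
private noncomputable def g (m : ℕ) : ℝ :=
  1 / (((m : ℝ) + 1) * (4 * ((m : ℝ) + 1) - 1) * (4 * ((m : ℝ) + 1) - 3))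

private lemma g_eq (m : ℕ) : g m = 1 / (((m : ℝ) + 1) * (4 * m + 3) * (4 * m + 1)) := by
  unfold g
  norm_num
  ring_nf

private lemma harm_cast (n : ℕ) : ((harmonic n : ℚ) : ℝ) = Hr n := by
  unfold Hr harmonic
  push_cast
  simp [one_div]

private lemma altA (N : ℕ) : Ah (2 * N) = Hr (2 * N) - Hr N := by
  induction N with
  | zero => simp [Ah, Hr]
  | succ n ih =>
    have h2 : 2 * (n + 1) = (2 * n) + 1 + 1 := by ring
    unfold Ah Hr at *
    rw [h2, Finset.sum_range_succ, Finset.sum_range_succ, Finset.sum_range_succ,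
      Finset.sum_range_succ, Finset.sum_range_succ, ih]
    have he : (-1 : ℝ) ^ (2 * n) = 1 := by simp [pow_mul]
    have ho : (-1 : ℝ) ^ (2 * n + 1) = -1 := by rw [pow_succ, he]; norm_num
    rw [he, ho]
    push_cast
    have ha : ((n:ℝ) + 1) ≠ 0 := by positivity
    have hb : (2 * (n:ℝ) + 1) ≠ 0 := by positivity
    have hcc : (2 * (n:ℝ) + 1 + 1) ≠ 0 := by positivity
    field_simp
    ring

private lemma tendsto_Ah2 : Tendsto (fun N => Ah (2 * N)) atTop (𝓝 (Real.log 2)) := by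
  have h1 : Tendsto (fun n : ℕ => (harmonic n : ℝ) - Real.log n) atTop
      (𝓝 Real.eulerMascheroniConstant) := Real.tendsto_harmonic_sub_log
  have h2 : Tendsto (fun n : ℕ => 2 * n) atTop atTop :=
    tendsto_atTop_atTop_of_monotone (fun a b hab => by omega) (fun b => ⟨b, by omega⟩)
  have h3 := ((h1.comp h2).sub h1).add (tendsto_const_nhds (x := Real.log 2))
  rw [sub_self, zero_add] at h3
  refine h3.congr' ?_
  filter_upwards [eventually_gt_atTop 0] with N hN
  have hlog : Real.log ((2 * N : ℕ) : ℝ) = Real.log 2 + Real.log N := by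
    push_cast
    rw [Real.log_mul two_ne_zero (by exact_mod_cast hN.ne')]
  simp only [Function.comp]
  rw [altA, ← harm_cast, ← harm_cast, hlog]
  ring

private lemma key_identity (N : ℕ) :
    ∑ m ∈ Finset.range N, g m = 4 / 3 * Lb (2 * N) - 2 / 3 * Ah (4 * N) - 1 / 3 * Ah (2 * N) := by
  induction N with
  | zero => simp [Lb, Ah]
  | succ n ih =>
    have e2 : 2 * (n + 1) = (2 * n) + 1 + 1 := by ring
    have e4 : 4 * (n + 1) = (4 * n) + 1 + 1 + 1 + 1 := by ring
    have he2 : (-1 : ℝ) ^ (2 * n) = 1 := by simp [pow_mul]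
    have he4 : (-1 : ℝ) ^ (4 * n) = 1 := by
      have h : 4 * n = 2 * (2 * n) := by ring
      rw [h, pow_mul]; norm_num
    have p1 : (-1 : ℝ) ^ (2 * n + 1) = -1 := by rw [pow_succ, he2]; norm_num
    have p2 : (-1 : ℝ) ^ (4 * n + 1) = -1 := by rw [pow_succ, he4]; norm_num
    have p3 : (-1 : ℝ) ^ (4 * n + 1 + 1) = 1 := by rw [pow_succ, p2]; norm_num
    have p4 : (-1 : ℝ) ^ (4 * n + 1 + 1 + 1) = -1 := by rw [pow_succ, p3]; norm_num
    unfold Lb Ah at *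
    rw [Finset.sum_range_succ, ih, e2, e4, Finset.sum_range_succ, Finset.sum_range_succ,
      Finset.sum_range_succ, Finset.sum_range_succ, Finset.sum_range_succ, Finset.sum_range_succ,
      Finset.sum_range_succ, Finset.sum_range_succ, he2, he4, p1, p2, p3, p4, g_eq]
    push_cast
    have hm : (0:ℝ) ≤ (n : ℝ) := Nat.cast_nonneg n
    have h1 : ((n : ℝ) + 1) ≠ 0 := by positivity
    have h2 : (4 * (n:ℝ) + 3) ≠ 0 := by positivity
    have h3 : (4 * (n:ℝ) + 1) ≠ 0 := by positivity
    have h4 : (2 * ((2:ℝ) * n) + 1) ≠ 0 := by positivity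
    have h5 : (2 * ((2:ℝ) * n + 1) + 1) ≠ 0 := by positivity
    have h6 : ((4:ℝ) * n + 1 + 1) ≠ 0 := by positivity
    have h7 : ((4:ℝ) * n + 1 + 1 + 1) ≠ 0 := by positivity
    have h8 : ((4:ℝ) * n + 1 + 1 + 1 + 1) ≠ 0 := by positivity
    have h9 : ((2:ℝ) * n + 1) ≠ 0 := by positivity
    have h10 : ((2:ℝ) * n + 1 + 1) ≠ 0 := by positivity
    field_simp
    ring

private lemma tendsto_partial :
    Tendsto (fun N => ∑ m ∈ Finset.range N, g m) atTop (𝓝 (π / 3 - Real.log 2)) := by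
  have h2 : Tendsto (fun n : ℕ => 2 * n) atTop atTop :=
    tendsto_atTop_atTop_of_monotone (fun a b hab => by omega) (fun b => ⟨b, by omega⟩)
  have hL : Tendsto (fun N => Lb (2 * N)) atTop (𝓝 (π / 4)) :=
    Real.tendsto_sum_pi_div_four.comp h2
  have hA2 : Tendsto (fun N => Ah (2 * N)) atTop (𝓝 (Real.log 2)) := tendsto_Ah2
  have hA4 : Tendsto (fun N => Ah (4 * N)) atTop (𝓝 (Real.log 2)) := by
    have h := hA2.comp h2
    refine h.congr (fun N => ?_)
    simp only [Function.comp]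
    congr 1
    omega
  have h := ((hL.const_mul (4/3 : ℝ)).sub (hA4.const_mul (2/3 : ℝ))).sub
    (hA2.const_mul (1/3 : ℝ))
  have heq : (4:ℝ)/3 * (π/4) - 2/3 * Real.log 2 - 1/3 * Real.log 2 = π/3 - Real.log 2 := by ring
  rw [heq] at h
  exact h.congr (fun N => (key_identity N).symm)

private lemma summable_g : Summable g := by
  have hs : Summable (fun m : ℕ => 1 / ((m : ℝ) + 1) ^ 2) := by
    have h := Real.summable_one_div_nat_pow.mpr (le_refl 2)
    exact_mod_cast (summable_nat_add_iff 1).mpr h |>.congr (fun m => by push_cast; ring)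
  refine Summable.of_nonneg_of_le (fun m => ?_) (fun m => ?_) hs
  · rw [g_eq]; positivity
  · rw [g_eq]
    have hm : (0:ℝ) ≤ (m:ℝ) := Nat.cast_nonneg m
    rw [div_le_div_iff₀ (by positivity) (by positivity)]
    nlinarith [hm, mul_nonneg hm hm, mul_nonneg (mul_nonneg hm hm) hm]

private lemma tsum_g : ∑' m : ℕ, g m = π / 3 - Real.log 2 :=
  tendsto_nhds_unique summable_g.hasSum.tendsto_sum_nat tendsto_partial

theorem stmt_13 : π = 3 * Real.log 2 + 3 * ∑' n : ℕ+, 1 / ((n : ℝ) * (4*(n : ℝ)-1) * (4*(n : ℝ)-3)) := by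
  have he : ∑' n : ℕ+, 1 / ((n : ℝ) * (4*(n : ℝ)-1) * (4*(n : ℝ)-3)) = ∑' m : ℕ, g m := by
    rw [← Equiv.pnatEquivNat.symm.tsum_eq
      (f := fun n : ℕ+ => 1 / ((n : ℝ) * (4*(n : ℝ)-1) * (4*(n : ℝ)-3)))]
    refine tsum_congr (fun m => ?_)
    unfold g
    have hn : ((Equiv.pnatEquivNat.symm m : ℕ+) : ℕ) = m + 1 := rfl
    have hc : ((Equiv.pnatEquivNat.symm m : ℕ+) : ℝ) = (m : ℝ) + 1 := by
      exact_mod_cast congrArg (fun k : ℕ => (k : ℝ)) hn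
    rw [hc]
  rw [he, tsum_g]
  ring
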